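/- arXiv:1602.07256 — 2 statements merged into one kernel-verified Lean document; each statement's English description precedes it below -/
import Mathlib

section
/- Let χ be a primitive Dirichlet character modulo q, let m be a nonzero integer, and let c be a positive integer with q ∣ c. Then ∑_{d mod c, gcd(d,c)=1} χ(d) e(md/c) = χ(sgn(m)) · τ(χ) · ∑_{d ∣ gcd(|m|, c/q)} d · χ̄(|m|/d) · χ(c/(dq)) · μ(c/(dq)), where the outer sum runs over a complete set of residues d modulo c that are coprime to c, sgn(m) ∈ {1,−1} is the sign of m, and μ is the Möbius function. -/
open DirichletCharacter Finset Complex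


lemma sum_range_eq_sum_zmod {N : ℕ} [NeZero N] (f : ZMod N → ℂ) :
    ∑ a ∈ Finset.range N, f a = ∑ x : ZMod N, f x := by
  refine Finset.sum_nbij' (fun a => (a : ZMod N)) (fun x => x.val) ?_ ?_ ?_ ?_ ?_
  · intro a _; exact Finset.mem_univ _
  · intro x _; exact Finset.mem_range.mpr (ZMod.val_lt x)
  · intro a ha; exact ZMod.val_natCast_of_lt (Finset.mem_range.mp ha)
  · intro x _; exact ZMod.natCast_zmod_val x
  · intro a _; rfl

lemma gauss_core {q : ℕ} [NeZero q] {χ : DirichletCharacter ℂ q} (hχ : χ.IsPrimitive) (n : ℤ) :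
    ∑ a ∈ Finset.range q, χ (a : ZMod q) * Complex.exp (2 * Real.pi * Complex.I * n * a / q)
      = χ⁻¹ ((n : ℤ) : ZMod q) * gaussSum χ (ZMod.stdAddChar) := by
  have step : ∀ a ∈ Finset.range q,
      χ (a : ZMod q) * Complex.exp (2 * Real.pi * Complex.I * n * a / q)
        = χ (a : ZMod q) * (ZMod.stdAddChar.mulShift ((n : ℤ) : ZMod q)) (a : ZMod q) := by
    intro a _
    congr 1
    rw [AddChar.mulShift_apply]
    have : ((n : ℤ) : ZMod q) * ((a : ℕ) : ZMod q) = (((n * a : ℤ)) : ZMod q) := by push_cast; ring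
    rw [this, ZMod.stdAddChar_coe]
    congr 1
    push_cast
    ring
  rw [Finset.sum_congr rfl step,
    sum_range_eq_sum_zmod (fun x : ZMod q => χ x * (ZMod.stdAddChar.mulShift ((n:ℤ) : ZMod q)) x)]
  exact gaussSum_mulShift_of_isPrimitive _ hχ _

lemma conj_eq_inv {q : ℕ} [NeZero q] (χ : DirichletCharacter ℂ q) (x : ZMod q) :
    (starRingEnd ℂ) (χ x) = χ⁻¹ x := by
  by_cases hx : IsUnit x
  · have hn : ‖χ x‖ = 1 := by
      have := DirichletCharacter.unit_norm_eq_one χ hx.unit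
      rwa [IsUnit.unit_spec] at this
    have h1 : (starRingEnd ℂ) (χ x) * χ x = 1 := by
      rw [mul_comm, Complex.mul_conj]
      norm_cast
      rw [Complex.normSq_eq_norm_sq, hn, one_pow]
    rw [MulChar.inv_apply_eq_inv' χ x]
    exact eq_inv_of_mul_eq_one_left h1
  · rw [MulChar.map_nonunit χ hx, MulChar.map_nonunit χ⁻¹ hx, map_zero]



lemma geom_sum_exp (s : ℕ) (hs : 0 < s) (n : ℤ) :
    ∑ i ∈ Finset.range s, Complex.exp (2 * Real.pi * Complex.I * n * i / s)
      = if (s : ℤ) ∣ n then (s : ℂ) else 0 := by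
  haveI : NeZero s := ⟨hs.ne'⟩
  have step : ∀ i ∈ Finset.range s,
      Complex.exp (2 * Real.pi * Complex.I * n * i / s)
        = ZMod.stdAddChar ((i : ZMod s) * ((n : ℤ) : ZMod s)) := by
    intro i _
    have : ((i : ℕ) : ZMod s) * ((n : ℤ) : ZMod s) = (((i * n : ℤ)) : ZMod s) := by
      push_cast; ring
    rw [this, ZMod.stdAddChar_coe]
    congr 1
    push_cast; ring
  rw [Finset.sum_congr rfl step,
    sum_range_eq_sum_zmod (fun x : ZMod s => ZMod.stdAddChar (x * ((n:ℤ) : ZMod s))),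
    AddChar.sum_mulShift _ (ZMod.isPrimitive_stdAddChar s)]
  simp only [ZMod.card]
  have h := ZMod.intCast_zmod_eq_zero_iff_dvd n s
  by_cases hd : (s : ℤ) ∣ n
  · rw [if_pos (h.mpr hd), if_pos hd]
  · rw [if_neg (fun hh => hd (h.mp hh)), if_neg hd, Nat.cast_zero]

lemma split_sum {q : ℕ} [NeZero q] {χ : DirichletCharacter ℂ q} (hχ : χ.IsPrimitive)
    (s : ℕ) (hs : 0 < s) (n : ℤ) :
    ∑ d ∈ Finset.range (q * s),
        χ (d : ZMod q) * Complex.exp (2 * Real.pi * Complex.I * n * d / (q * s))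
      = (if (s : ℤ) ∣ n then (s : ℂ) * χ⁻¹ (((n / s : ℤ)) : ZMod q) else 0) *
          gaussSum χ ZMod.stdAddChar := by
  have hq : 0 < q := Nat.pos_of_ne_zero (NeZero.ne q)
  have hqC : (q : ℂ) ≠ 0 := Nat.cast_ne_zero.mpr hq.ne'
  have hsC : (s : ℂ) ≠ 0 := Nat.cast_ne_zero.mpr hs.ne'
  have key : ∑ p ∈ Finset.range q ×ˢ Finset.range s,
      (χ ((p.1 : ℕ) : ZMod q) * Complex.exp (2 * Real.pi * Complex.I * n * p.1 / (q * s)))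
        * Complex.exp (2 * Real.pi * Complex.I * n * p.2 / s)
      = ∑ d ∈ Finset.range (q * s),
        χ (d : ZMod q) * Complex.exp (2 * Real.pi * Complex.I * n * d / (q * s)) := by
    refine Finset.sum_nbij' (fun p => p.1 + q * p.2) (fun d => (d % q, d / q)) ?_ ?_ ?_ ?_ ?_
    · rintro ⟨a, b⟩ hp
      simp only [Finset.mem_product, Finset.mem_range] at hp
      simp only [Finset.mem_range]
      calc a + q * b < q + q * b := by omega
        _ = q * (b + 1) := by ring
        _ ≤ q * s := Nat.mul_le_mul_left q hp.2
    · intro d hd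
      simp only [Finset.mem_range] at hd
      simp only [Finset.mem_product, Finset.mem_range]
      exact ⟨Nat.mod_lt _ hq, Nat.div_lt_of_lt_mul (by omega)⟩
    · rintro ⟨a, b⟩ hp
      simp only [Finset.mem_product, Finset.mem_range] at hp
      have h1 : (a + q * b) % q = a := by
        rw [Nat.add_mul_mod_self_left, Nat.mod_eq_of_lt hp.1]
      have h2 : (a + q * b) / q = b := by
        rw [Nat.add_mul_div_left _ _ hq, Nat.div_eq_of_lt hp.1, Nat.zero_add]
      simp [h1, h2]
    · intro d _
      exact Nat.mod_add_div d q
    · rintro ⟨a, b⟩ hp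
      simp only [Finset.mem_product, Finset.mem_range] at hp
      have hcast : (((a + q * b : ℕ)) : ZMod q) = ((a : ℕ) : ZMod q) := by
        push_cast [ZMod.natCast_self]; ring
      rw [hcast, mul_assoc, ← Complex.exp_add]
      congr 2
      field_simp
      push_cast; ring
  rw [← key, Finset.sum_product]
  simp only [← Finset.sum_mul, ← Finset.mul_sum]
  rw [geom_sum_exp s hs n]
  by_cases hd : (s : ℤ) ∣ n
  · rw [if_pos hd, if_pos hd]
    obtain ⟨t, rfl⟩ := hd
    have ht : (s : ℤ) * t / s = t := Int.mul_ediv_cancel_left t (by exact_mod_cast hs.ne')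
    have harg : ∀ a ∈ Finset.range q,
        χ ((a : ℕ) : ZMod q) *
            Complex.exp (2 * Real.pi * Complex.I * ((((s : ℤ) * t) : ℤ) : ℂ) * a / (q * s))
          = χ ((a : ℕ) : ZMod q) * Complex.exp (2 * Real.pi * Complex.I * t * a / q) := by
      intro a _
      congr 2
      push_cast
      field_simp
    rw [Finset.sum_congr rfl harg, gauss_core hχ t, ht]
    ring
  · rw [if_neg hd, if_neg hd]
    simp

lemma moebius_sum_divisors (n : ℕ) :
    ∑ e ∈ n.divisors, ((ArithmeticFunction.moebius e : ℤ) : ℂ)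
      = if n = 1 then 1 else 0 := by
  have h : ∑ e ∈ n.divisors, (ArithmeticFunction.moebius e : ℤ)
      = if n = 1 then 1 else 0 := by
    have h0 := congrArg (fun f => f n) ArithmeticFunction.moebius_mul_coe_zeta
    simp only [ArithmeticFunction.coe_mul_zeta_apply, ArithmeticFunction.one_apply] at h0
    exact h0
  calc ∑ e ∈ n.divisors, ((ArithmeticFunction.moebius e : ℤ) : ℂ)
      = ((∑ e ∈ n.divisors, (ArithmeticFunction.moebius e : ℤ) : ℤ) : ℂ) := by push_cast; ring
    _ = _ := by rw [h]; split_ifs <;> simp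

lemma divisors_gcd_eq {r : ℕ} (d : ℕ) (hr : r ≠ 0) :
    (Nat.gcd d r).divisors = r.divisors.filter (· ∣ d) := by
  ext e
  simp only [Nat.mem_divisors, Finset.mem_filter, Nat.dvd_gcd_iff]
  constructor
  · rintro ⟨⟨h1, h2⟩, -⟩; exact ⟨⟨h2, hr⟩, h1⟩
  · rintro ⟨⟨h2, -⟩, h1⟩
    refine ⟨⟨h1, h2⟩, fun hg => hr ?_⟩
    exact ((Nat.gcd_eq_zero_iff).mp hg).2

lemma detach {q : ℕ} [NeZero q] (χ : DirichletCharacter ℂ q) (r : ℕ) (hr : 0 < r) (m : ℤ) :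
    ∑ d ∈ (Finset.range (q * r)).filter (fun d => Nat.Coprime d (q * r)),
        χ (d : ZMod q) * Complex.exp (2 * Real.pi * Complex.I * m * d / (q * r))
      = ∑ e ∈ r.divisors, ((ArithmeticFunction.moebius e : ℤ) : ℂ) * χ ((e : ℕ) : ZMod q) *
          ∑ k ∈ Finset.range (q * (r / e)),
            χ (k : ZMod q) *
              Complex.exp (2 * Real.pi * Complex.I * m * k / ((q * (r / e) : ℕ) : ℂ)) := by
  have hq : 0 < q := Nat.pos_of_ne_zero (NeZero.ne q)
  have hqC : (q : ℂ) ≠ 0 := Nat.cast_ne_zero.mpr hq.ne'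
  set T : ℕ → ℂ := fun d =>
    χ (d : ZMod q) * Complex.exp (2 * Real.pi * Complex.I * m * d / (q * r)) with hT
  have step1 : ∑ d ∈ (Finset.range (q * r)).filter (fun d => Nat.Coprime d (q * r)), T d
      = ∑ d ∈ Finset.range (q * r), (if Nat.Coprime d r then (1 : ℂ) else 0) * T d := by
    rw [Finset.sum_filter]
    refine Finset.sum_congr rfl fun d _ => ?_
    by_cases hdq : Nat.Coprime d q
    · have : Nat.Coprime d (q * r) ↔ Nat.Coprime d r := by
        rw [Nat.coprime_mul_iff_right]; tauto
      by_cases hdr : Nat.Coprime d r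
      · rw [if_pos (this.mpr hdr), if_pos hdr, one_mul]
      · rw [if_neg (fun hh => hdr (this.mp hh)), if_neg hdr, zero_mul]
    · have hz : χ (d : ZMod q) = 0 :=
        MulChar.map_nonunit χ (fun hu => hdq ((ZMod.isUnit_iff_coprime d q).mp hu))
      have hTz : T d = 0 := by rw [hT]; simp [hz]
      have hnc : ¬ Nat.Coprime d (q * r) :=
        fun hh => hdq (Nat.Coprime.coprime_dvd_right (dvd_mul_right q r) hh)
      rw [if_neg hnc, hTz, mul_zero]
  have step2 : ∀ d : ℕ, (if Nat.Coprime d r then (1 : ℂ) else 0)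
      = ∑ e ∈ r.divisors.filter (· ∣ d), ((ArithmeticFunction.moebius e : ℤ) : ℂ) := by
    intro d
    rw [← divisors_gcd_eq d hr.ne', moebius_sum_divisors]
  have step3 : ∑ d ∈ Finset.range (q * r), (if Nat.Coprime d r then (1 : ℂ) else 0) * T d
      = ∑ e ∈ r.divisors, ((ArithmeticFunction.moebius e : ℤ) : ℂ) *
          ∑ d ∈ (Finset.range (q * r)).filter (fun d => e ∣ d), T d := by
    calc ∑ d ∈ Finset.range (q * r), (if Nat.Coprime d r then (1 : ℂ) else 0) * T d
        = ∑ d ∈ Finset.range (q * r), ∑ e ∈ r.divisors,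
            (if e ∣ d then ((ArithmeticFunction.moebius e : ℤ) : ℂ) * T d else 0) := by
          refine Finset.sum_congr rfl fun d _ => ?_
          rw [step2 d, Finset.sum_mul, Finset.sum_filter]
      _ = ∑ e ∈ r.divisors, ∑ d ∈ Finset.range (q * r),
            (if e ∣ d then ((ArithmeticFunction.moebius e : ℤ) : ℂ) * T d else 0) :=
          Finset.sum_comm
      _ = ∑ e ∈ r.divisors, ((ArithmeticFunction.moebius e : ℤ) : ℂ) *
            ∑ d ∈ (Finset.range (q * r)).filter (fun d => e ∣ d), T d := by
          refine Finset.sum_congr rfl fun e _ => ?_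
          rw [← Finset.sum_filter, Finset.mul_sum]
  have step4 : ∀ e ∈ r.divisors, ∑ d ∈ (Finset.range (q * r)).filter (fun d => e ∣ d), T d
      = χ ((e : ℕ) : ZMod q) * ∑ k ∈ Finset.range (q * (r / e)),
          χ (k : ZMod q) *
            Complex.exp (2 * Real.pi * Complex.I * m * k / ((q * (r / e) : ℕ) : ℂ)) := by
    intro e he
    obtain ⟨her, hr0⟩ := Nat.mem_divisors.mp he
    have he0 : 0 < e := Nat.pos_of_dvd_of_pos her hr
    have hre : e * (r / e) = r := Nat.mul_div_cancel' her
    have hre0 : 0 < r / e := Nat.div_pos (Nat.le_of_dvd hr her) he0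
    have heC : (e : ℂ) ≠ 0 := Nat.cast_ne_zero.mpr he0.ne'
    have hreC : ((r / e : ℕ) : ℂ) ≠ 0 := Nat.cast_ne_zero.mpr hre0.ne'
    have hrC : (r : ℂ) = (e : ℂ) * ((r / e : ℕ) : ℂ) := by exact_mod_cast hre.symm
    rw [Finset.mul_sum]
    refine (Finset.sum_nbij' (fun k => e * k) (fun d => d / e) ?_ ?_ ?_ ?_ ?_).symm
    · intro k hk
      simp only [Finset.mem_range] at hk
      simp only [Finset.mem_filter, Finset.mem_range]
      constructor
      · calc e * k < e * (q * (r / e)) := by exact (Nat.mul_lt_mul_left he0).mpr hk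
          _ = q * r := by rw [Nat.mul_left_comm, hre]
      · exact dvd_mul_right e k
    · intro d hd
      simp only [Finset.mem_filter, Finset.mem_range] at hd
      simp only [Finset.mem_range]
      rw [Nat.div_lt_iff_lt_mul he0]
      have hx : q * (r / e) * e = q * r := by
        rw [mul_assoc, mul_comm (r / e) e, hre]
      rw [hx]
      exact hd.1
    · intro k _; exact Nat.mul_div_cancel_left k he0
    · intro d hd
      simp only [Finset.mem_filter, Finset.mem_range] at hd
      exact Nat.mul_div_cancel' hd.2
    · intro k _
      simp only [hT]
      push_cast
      have harg : 2 * (Real.pi : ℂ) * Complex.I * (m : ℂ) * (k : ℂ) / ((q : ℂ) * ((r / e : ℕ) : ℂ))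
          = 2 * Real.pi * Complex.I * m * ((e : ℂ) * k) / (q * r) := by
        rw [hrC]; field_simp
      rw [harg, map_mul]
      ring
  rw [step1, step3]
  refine Finset.sum_congr rfl fun e he => ?_
  rw [step4 e he]
  ring


/-- For a primitive character `χ` mod `q`, a nonzero integer `m`, and `q ∣ c`,
`∑_{d mod c, (d,c)=1} χ(d) e(md/c)
  = χ(sgn m) τ(χ) ∑_{d ∣ (|m|, c/q)} d χ̄(|m|/d) χ(c/(dq)) μ(c/(dq))`. -/
theorem ramanujan_type_sum_primitive_character
    (q : ℕ) [NeZero q] (χ : DirichletCharacter ℂ q) (hχ : χ.IsPrimitive)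
    (m : ℤ) (hm : m ≠ 0) (c : ℕ) (hc : 0 < c) (hqc : q ∣ c) :
    ∑ d ∈ (Finset.range c).filter (fun d => Nat.Coprime d c),
        χ (d : ZMod q) * Complex.exp (2 * Real.pi * Complex.I * m * d / c)
      = χ ((Int.sign m : ℤ) : ZMod q) *
        (∑ a ∈ Finset.range q, χ (a : ZMod q) * Complex.exp (2 * Real.pi * Complex.I * a / q)) *
        ∑ d ∈ (Nat.gcd m.natAbs (c / q)).divisors,
          (d : ℂ) * (starRingEnd ℂ) (χ ((m.natAbs / d : ℕ) : ZMod q)) *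
            χ ((c / (d * q) : ℕ) : ZMod q) *
            ((ArithmeticFunction.moebius (c / (d * q)) : ℤ) : ℂ) := by
  have hq : 0 < q := Nat.pos_of_ne_zero (NeZero.ne q)
  obtain ⟨r, rfl⟩ := hqc
  have hr : 0 < r := by
    rcases Nat.eq_zero_or_pos r with h | h
    · subst h; simp at hc
    · exact h
  have hqr : q * r / q = r := Nat.mul_div_cancel_left r hq
  set g := gaussSum χ ZMod.stdAddChar with hg
  have tau_eq : ∑ a ∈ Finset.range q, χ (a : ZMod q)
      * Complex.exp (2 * Real.pi * Complex.I * a / q) = g := by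
    have t1 := gauss_core hχ 1
    have t2 : ∀ a ∈ Finset.range q,
        χ (a : ZMod q) * Complex.exp (2 * Real.pi * Complex.I * a / q)
          = χ (a : ZMod q) * Complex.exp (2 * Real.pi * Complex.I * ((1 : ℤ) : ℂ) * a / q) := by
      intro a _; norm_num
    rw [Finset.sum_congr rfl t2, t1]
    simp [hg]
  rw [hqr, tau_eq]
  have hmain := detach χ r hr m
  have hinner : ∀ e ∈ r.divisors,
      ((ArithmeticFunction.moebius e : ℤ) : ℂ) * χ ((e : ℕ) : ZMod q) *
          ∑ k ∈ Finset.range (q * (r / e)),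
            χ (k : ZMod q) *
              Complex.exp (2 * Real.pi * Complex.I * m * k / ((q * (r / e) : ℕ) : ℂ))
        = ((ArithmeticFunction.moebius e : ℤ) : ℂ) * χ ((e : ℕ) : ZMod q) *
            ((if ((r / e : ℕ) : ℤ) ∣ m then ((r / e : ℕ) : ℂ) *
              χ⁻¹ (((m / (r / e : ℕ) : ℤ)) : ZMod q) else 0) * g) := by
    intro e he
    obtain ⟨her, hr0⟩ := Nat.mem_divisors.mp he
    have hre0 : 0 < r / e :=
      Nat.div_pos (Nat.le_of_dvd hr her) (Nat.pos_of_dvd_of_pos her hr)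
    congr 1
    have hsplit := split_sum hχ (r / e) hre0 m
    rw [← hsplit]
    refine Finset.sum_congr rfl fun k _ => ?_
    congr 2
    push_cast
    ring
  rw [Finset.sum_congr rfl hinner] at hmain
  have hcast : ((q * r : ℕ) : ℂ) = (q : ℂ) * (r : ℂ) := by push_cast; ring
  rw [hcast, hmain]
  rw [← Nat.sum_div_divisors r (fun e => ((ArithmeticFunction.moebius e : ℤ) : ℂ) *
      χ ((e : ℕ) : ZMod q) *
      ((if ((r / e : ℕ) : ℤ) ∣ m then ((r / e : ℕ) : ℂ) *
        χ⁻¹ (((m / (r / e : ℕ) : ℤ)) : ZMod q) else 0) * g))]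
  have hstep : ∀ d ∈ r.divisors,
      ((ArithmeticFunction.moebius (r / d) : ℤ) : ℂ) * χ (((r / d : ℕ)) : ZMod q) *
          ((if ((r / (r / d) : ℕ) : ℤ) ∣ m then ((r / (r / d) : ℕ) : ℂ) *
            χ⁻¹ (((m / (r / (r / d) : ℕ) : ℤ)) : ZMod q) else 0) * g)
        = ((ArithmeticFunction.moebius (r / d) : ℤ) : ℂ) * χ (((r / d : ℕ)) : ZMod q) *
          ((if ((d : ℕ) : ℤ) ∣ m then ((d : ℕ) : ℂ) *
            χ⁻¹ (((m / (d : ℕ) : ℤ)) : ZMod q) else 0) * g) := by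
    intro d hd
    obtain ⟨hdr, -⟩ := Nat.mem_divisors.mp hd
    rw [Nat.div_div_self hdr hr.ne']
  rw [Finset.sum_congr rfl hstep]
  have hsub : (Nat.gcd m.natAbs r).divisors ⊆ r.divisors := by
    intro d hd
    obtain ⟨hdg, hg0⟩ := Nat.mem_divisors.mp hd
    exact Nat.mem_divisors.mpr ⟨hdg.trans (Nat.gcd_dvd_right _ _), hr.ne'⟩
  rw [← Finset.sum_subset hsub ?h0]
  case h0 =>
    intro d hd hnd
    obtain ⟨hdr, -⟩ := Nat.mem_divisors.mp hd
    have hndm : ¬ ((d : ℤ) ∣ m) := by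
      intro hdvd
      refine hnd (Nat.mem_divisors.mpr ⟨Nat.dvd_gcd ?_ hdr, ?_⟩)
      · exact Int.natCast_dvd_natCast.mp (Int.dvd_natAbs.mpr hdvd)
      · exact Nat.gcd_ne_zero_right hr.ne'
    rw [if_neg hndm]
    ring
  rw [Finset.mul_sum]
  refine Finset.sum_congr rfl fun d hd => ?_
  obtain ⟨hdg, hg0⟩ := Nat.mem_divisors.mp hd
  have hdm : d ∣ m.natAbs := hdg.trans (Nat.gcd_dvd_left _ _)
  have hdr : d ∣ r := hdg.trans (Nat.gcd_dvd_right _ _)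
  have hdvd : (d : ℤ) ∣ m := Int.dvd_natAbs.mp (Int.natCast_dvd_natCast.mpr hdm)
  rw [if_pos hdvd]
  have hcq : q * r / (d * q) = r / d := by
    rw [mul_comm d q, ← Nat.div_div_eq_div_mul, hqr]
  rw [hcq]
  have hmd : m / (d : ℤ) = m.sign * ((m.natAbs / d : ℕ) : ℤ) := by
    conv_lhs => rw [← Int.sign_mul_natAbs m]
    rw [Int.mul_ediv_assoc _ (Int.natCast_dvd_natCast.mpr hdm)]
    norm_cast
  have hsign : χ⁻¹ ((m.sign : ℤ) : ZMod q) = χ ((m.sign : ℤ) : ZMod q) := by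
    rcases lt_trichotomy m 0 with h | h | h
    · rw [Int.sign_eq_neg_one_of_neg h]
      push_cast
      have h2 : χ (-1 : ZMod q) * χ (-1 : ZMod q) = 1 := by
        rw [← map_mul]; norm_num
      rw [MulChar.inv_apply_eq_inv' χ (-1 : ZMod q)]
      exact inv_eq_of_mul_eq_one_left h2
    · exact absurd h hm
    · rw [Int.sign_eq_one_of_pos h]; simp
  have hinv : χ⁻¹ (((m / (d : ℤ)) : ℤ) : ZMod q)
      = χ ((m.sign : ℤ) : ZMod q) * (starRingEnd ℂ) (χ ((m.natAbs / d : ℕ) : ZMod q)) := by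
    rw [hmd, Int.cast_mul, Int.cast_natCast, map_mul, hsign, ← conj_eq_inv]
  rw [hinv]
  ring
end

section
/- Let q ≥ 1 be an integer, and suppose q = vw = v'w' where v, w, v', w' are positive integers with gcd(v,w) = 1 and gcd(v',w') = 1. Define the matrices σ = [[√w, 0], [v√w, 1/√w]] and σ' = [[√w', 0], [v'√w', 1/√w']] in SL₂(ℝ). Let g = [[a,b],[c,d]] ∈ SL₂(ℤ) with q ∣ c, and set γ = σ'⁻¹ g σ ∈ SL₂(ℝ). If the lower-left entry of γ is nonzero, then for every point z in the upper half-plane ℍ one has Im(z) · Im(γ·z) ≤ 1, where γ acts on ℍ by Möbius transformations γ·z = ((γ₁₁ z + γ₁₂)/(γ₂₁ z + γ₂₂)). -/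
open Matrix

lemma aux_im (A B C D : ℝ) (hdet : A * D - B * C = 1) (hC : 1 ≤ C ^ 2)
    (z : ℂ) (hz : 0 < z.im) :
    z.im * (((A : ℂ) * z + B) / ((C : ℂ) * z + D)).im ≤ 1 := by
  have hC0 : C ≠ 0 := by nlinarith
  set N : ℝ := Complex.normSq ((C : ℂ) * z + D) with hN
  have hNval : N = (C * z.re + D) ^ 2 + (C * z.im) ^ 2 := by
    simp [hN, Complex.normSq_apply]; ring
  have hNpos : 0 < N := by nlinarith [sq_nonneg (C * z.re + D), sq_nonneg (C * z.im), mul_pos (mul_pos hz hz) (lt_of_lt_of_le one_pos hC)]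
  have him : (((A : ℂ) * z + B) / ((C : ℂ) * z + D)).im = z.im / N := by
    rw [Complex.div_im]
    simp only [Complex.add_im, Complex.add_re, Complex.mul_im, Complex.mul_re,
      Complex.ofReal_re, Complex.ofReal_im]
    rw [← hN]
    field_simp
    ring_nf
    nlinarith [hdet]
  rw [him]
  have hle : z.im ^ 2 ≤ N := by nlinarith [sq_nonneg (C * z.re + D), sq_nonneg z.im]
  rw [show z.im * (z.im / N) = z.im ^ 2 / N by ring, div_le_one hNpos]
  exact hle

/-- If `γ = σ'⁻¹ g σ` with `g ∈ Γ₀(q)` and scaling matrices `σ, σ'` attached to cusps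
`1/v`, `1/v'`, and the lower-left entry of `γ` is nonzero, then `Im(z)·Im(γz) ≤ 1`
for all `z` in the upper half-plane. -/
theorem im_mul_im_moebius_le_one
    (q v w v' w' : ℕ) (hq : 1 ≤ q)
    (hvw : v * w = q) (hv'w' : v' * w' = q)
    (hcop : Nat.Coprime v w) (hcop' : Nat.Coprime v' w')
    (g : Matrix (Fin 2) (Fin 2) ℤ) (hdet : g.det = 1) (hg : (q : ℤ) ∣ g 1 0) :
    let σ : Matrix (Fin 2) (Fin 2) ℝ :=
      !![Real.sqrt w, 0; v * Real.sqrt w, 1 / Real.sqrt w]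
    let σ' : Matrix (Fin 2) (Fin 2) ℝ :=
      !![Real.sqrt w', 0; v' * Real.sqrt w', 1 / Real.sqrt w']
    let γ : Matrix (Fin 2) (Fin 2) ℝ := σ'⁻¹ * g.map (Int.cast) * σ
    γ 1 0 ≠ 0 →
      ∀ z : ℂ, 0 < z.im →
        z.im * ((((γ 0 0 : ℝ) : ℂ) * z + ((γ 0 1 : ℝ) : ℂ)) /
          (((γ 1 0 : ℝ) : ℂ) * z + ((γ 1 1 : ℝ) : ℂ))).im ≤ 1 := by
  intro σ σ' γ hγ10 z hz
  have hw : 0 < w := by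
    rcases Nat.eq_zero_or_pos w with h | h
    · rw [h, Nat.mul_zero] at hvw; omega
    · exact h
  have hw' : 0 < w' := by
    rcases Nat.eq_zero_or_pos w' with h | h
    · rw [h, Nat.mul_zero] at hv'w'; omega
    · exact h
  set sw := Real.sqrt w with hsw
  set sw' := Real.sqrt w' with hsw'
  have hswpos : 0 < sw := Real.sqrt_pos.2 (by exact_mod_cast hw)
  have hsw'pos : 0 < sw' := Real.sqrt_pos.2 (by exact_mod_cast hw')
  have hsw0 : sw ≠ 0 := ne_of_gt hswpos
  have hsw'0 : sw' ≠ 0 := ne_of_gt hsw'pos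
  have hswsq : sw * sw = (w : ℝ) := Real.mul_self_sqrt (by positivity)
  have hsw'sq : sw' * sw' = (w' : ℝ) := Real.mul_self_sqrt (by positivity)
  -- explicit inverse
  have hinv : σ'⁻¹ = !![1 / sw', 0; -(v' * sw'), sw'] := by
    apply Matrix.inv_eq_right_inv
    show (!![sw', 0; v' * sw', 1 / sw'] : Matrix (Fin 2) (Fin 2) ℝ) * _ = 1
    ext i j
    fin_cases i <;> fin_cases j <;>
      simp [Matrix.mul_apply, Fin.sum_univ_succ, Matrix.one_apply] <;> field_simp <;> ring
  have hgm : g.map (Int.cast : ℤ → ℝ) =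
      !![(g 0 0 : ℝ), (g 0 1 : ℝ); (g 1 0 : ℝ), (g 1 1 : ℝ)] := by
    ext i j; fin_cases i <;> fin_cases j <;> simp [Matrix.map_apply]
  have hγeq : γ = !![1 / sw', 0; -(v' * sw'), sw'] *
      !![(g 0 0 : ℝ), (g 0 1 : ℝ); (g 1 0 : ℝ), (g 1 1 : ℝ)] * σ := by
    show σ'⁻¹ * g.map (Int.cast) * σ = _
    rw [hinv, hgm]
  -- explicit γ
  have hγval : γ = !![(g 0 0 / sw') * sw + (g 0 1 / sw') * (v * sw),
      (g 0 1 / sw') * (1 / sw);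
      (-(v' * sw') * g 0 0 + sw' * g 1 0) * sw
        + (-(v' * sw') * g 0 1 + sw' * g 1 1) * (v * sw),
      (-(v' * sw') * g 0 1 + sw' * g 1 1) * (1 / sw)] := by
    rw [hγeq]
    show _ * _ * (!![sw, 0; v * sw, 1 / sw]) = _
    rw [Matrix.mul_fin_two, Matrix.mul_fin_two]
    congr 1 <;> ring
  set n : ℤ := g 1 0 + g 1 1 * v - v' * (g 0 0 + g 0 1 * v) with hn
  have h10 : γ 1 0 = sw * sw' * (n : ℝ) := by
    rw [hγval]
    simp [hn]
    push_cast
    ring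
  have hn0 : n ≠ 0 := by
    intro h
    apply hγ10
    rw [h10, h]
    simp
  have hC : 1 ≤ (γ 1 0) ^ 2 := by
    rw [h10]
    have h1 : (1 : ℝ) ≤ (n : ℝ) ^ 2 := by
      have : 1 ≤ n ^ 2 := by
        rcases lt_or_gt_of_ne hn0 with h | h <;> nlinarith
      exact_mod_cast this
    have h2 : (1 : ℝ) ≤ (w : ℝ) := by exact_mod_cast hw
    have h3 : (1 : ℝ) ≤ (w' : ℝ) := by exact_mod_cast hw'
    have h4 : (1 : ℝ) ≤ (w : ℝ) * (w' : ℝ) := by nlinarith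
    calc (1 : ℝ) ≤ (w : ℝ) * (w' : ℝ) * (n : ℝ) ^ 2 := by
          have := mul_le_mul h4 h1 zero_le_one (le_trans zero_le_one h4)
          linarith
      _ = (sw * sw' * (n : ℝ)) ^ 2 := by rw [← hswsq, ← hsw'sq]; ring
  have hdetγ : γ 0 0 * γ 1 1 - γ 0 1 * γ 1 0 = 1 := by
    have : γ.det = 1 := by
      rw [hγeq, Matrix.det_mul, Matrix.det_mul]
      rw [Matrix.det_fin_two_of, Matrix.det_fin_two_of]
      show _ * _ * (!![sw, 0; v * sw, 1 / sw]).det = 1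
      rw [Matrix.det_fin_two_of]
      have hdg : (g 0 0 : ℝ) * (g 1 1 : ℝ) - (g 0 1 : ℝ) * (g 1 0 : ℝ) = 1 := by
        have := hdet
        rw [Matrix.det_fin_two] at this
        exact_mod_cast this
      field_simp
      linarith [hdg]
    rw [Matrix.det_fin_two] at this
    exact this
  exact aux_im _ _ _ _ hdetγ hC z hz
end
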